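/- Let b : ℕ → ℝ be nonnegative, let θ : ℕ → ℝ, and for l ≤ r set S(l, r) = ∑_{j=l}^{r−1} b(j). For l < r with S(l, r) > 0 define the unit vector ψ(l, r) = (1/√(S(l,r))) · ∑_{j=l}^{r−1} exp(i(θ(j) − θ(l))/2)·√(b(j))·e_j (a complex-valued finitely supported function on ℕ). Then for all u < w < v with S(u, w) > 0 and S(w, v) > 0: ψ(u, v) = √(S(u,w)/S(u,v))·ψ(u, w) + exp(i(θ(w) − θ(u))/2)·√(S(w,v)/S(u,v))·ψ(w, v). This is the amplitude decomposition that justifies one recursive step of the quantum state preparation circuit, with γ = S(u,w)/S(u,v) and β = θ(w) − θ(u). -/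

import Mathlib

/-!
Both sides are multiples of the unnormalized sum over `[u, v)`: split it at `w`, shift the
phase of the second block from `θ u` to `θ w`, and use `√(S(u,w)/S(u,v)) · (1/√S(u,w)) =
1/√S(u,v)` (and likewise for `[w, v)`) to match the normalizations.
-/

open scoped BigOperators

/-- `Ssum b l r = ∑_{j=l}^{r-1} b j`. -/
noncomputable def Ssum (b : ℕ → ℝ) (l r : ℕ) : ℝ := ∑ j ∈ Finset.Ico l r, b j

/-- The (finitely supported) state
`ψ(l,r) = (1/√(S(l,r))) · ∑_{j=l}^{r−1} exp(i(θ j − θ l)/2)·√(b j)·e_j`. -/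
noncomputable def qspState (b θ : ℕ → ℝ) (l r : ℕ) : ℕ →₀ ℂ :=
  (1 / (Real.sqrt (Ssum b l r) : ℂ)) •
    ∑ j ∈ Finset.Ico l r,
      (Complex.exp (Complex.I * ((θ j : ℂ) - (θ l : ℂ)) / 2) * (Real.sqrt (b j) : ℂ)) •
        Finsupp.single j (1 : ℂ)

/-- The reference phase `φ` is left free so that the two blocks of a split interval can be
brought to a common phase. -/
noncomputable def qspUnnormalized (b θ : ℕ → ℝ) (φ : ℝ) (l r : ℕ) : ℕ →₀ ℂ :=
  ∑ j ∈ Finset.Ico l r,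
    (Complex.exp (Complex.I * ((θ j : ℂ) - (φ : ℂ)) / 2) * (Real.sqrt (b j) : ℂ)) •
      Finsupp.single j (1 : ℂ)

theorem qspState_eq_smul_qspUnnormalized (b θ : ℕ → ℝ) (l r : ℕ) :
    qspState b θ l r = (1 / (Real.sqrt (Ssum b l r) : ℂ)) • qspUnnormalized b θ (θ l) l r :=
  rfl

theorem qspUnnormalized_add (b θ : ℕ → ℝ) (φ : ℝ) {l m r : ℕ} (hlm : l ≤ m) (hmr : m ≤ r) :
    qspUnnormalized b θ φ l m + qspUnnormalized b θ φ m r = qspUnnormalized b θ φ l r :=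
  Finset.sum_Ico_consecutive _ hlm hmr

theorem qspUnnormalized_rephase (b θ : ℕ → ℝ) (φ φ' : ℝ) (l r : ℕ) :
    qspUnnormalized b θ φ l r =
      Complex.exp (Complex.I * ((φ' : ℂ) - (φ : ℂ)) / 2) • qspUnnormalized b θ φ' l r := by
  rw [qspUnnormalized, qspUnnormalized, Finset.smul_sum]
  refine Finset.sum_congr rfl fun j _ => ?_
  rw [smul_smul, ← mul_assoc, ← Complex.exp_add]
  congr 3
  ring

theorem Complex.ofReal_sqrt_div_mul_one_div_sqrt {a : ℝ} (ha : 0 < a) (c : ℝ) :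
    (Real.sqrt (a / c) : ℂ) * (1 / (Real.sqrt a : ℂ)) = 1 / (Real.sqrt c : ℂ) := by
  have hsa : (Real.sqrt a : ℂ) ≠ 0 := Complex.ofReal_ne_zero.mpr (Real.sqrt_pos.mpr ha).ne'
  rw [Real.sqrt_div ha.le, Complex.ofReal_div]
  field_simp

theorem qspState_decomposition_general (b θ : ℕ → ℝ)
    (u w v : ℕ) (huw : u < w) (hwv : w < v)
    (hS1 : 0 < Ssum b u w) (hS2 : 0 < Ssum b w v) :
    qspState b θ u v =
      (Real.sqrt (Ssum b u w / Ssum b u v) : ℂ) • qspState b θ u w +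
        (Complex.exp (Complex.I * ((θ w : ℂ) - (θ u : ℂ)) / 2) *
          (Real.sqrt (Ssum b w v / Ssum b u v) : ℂ)) • qspState b θ w v := by
  simp only [qspState_eq_smul_qspUnnormalized, smul_smul]
  rw [← qspUnnormalized_add b θ (θ u) huw.le hwv.le, qspUnnormalized_rephase b θ (θ u) (θ w) w v,
    smul_add, smul_smul, mul_assoc, Complex.ofReal_sqrt_div_mul_one_div_sqrt hS1,
    Complex.ofReal_sqrt_div_mul_one_div_sqrt hS2, mul_comm]

/-- the amplitude decomposition justifying one recursive step of quantum
state preparation: for `u < w < v` with `S(u,w) > 0` and `S(w,v) > 0`,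
`ψ(u,v) = √(S(u,w)/S(u,v))·ψ(u,w) + exp(i(θ w − θ u)/2)·√(S(w,v)/S(u,v))·ψ(w,v)`. -/
theorem qspState_decomposition (b θ : ℕ → ℝ) (hb : ∀ j, 0 ≤ b j)
    (u w v : ℕ) (huw : u < w) (hwv : w < v)
    (hS1 : 0 < Ssum b u w) (hS2 : 0 < Ssum b w v) :
    qspState b θ u v =
      (Real.sqrt (Ssum b u w / Ssum b u v) : ℂ) • qspState b θ u w +
        (Complex.exp (Complex.I * ((θ w : ℂ) - (θ u : ℂ)) / 2) *
          (Real.sqrt (Ssum b w v / Ssum b u v) : ℂ)) • qspState b θ w v :=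
  qspState_decomposition_general b θ u w v huw hwv hS1 hS2
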